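/- For 1 ≤ q ≤ 2, the function f(x) = −x^q on [0,∞) is superquadratic: for every t ≥ 0 there exists C_t ∈ ℝ such that −s^q ≥ −t^q + C_t(s−t) − |s−t|^q for all s ≥ 0. -/

import Mathlib

open Matrix
open scoped ComplexOrder

/-- A function `f : [0,∞) → ℝ` is superquadratic if for every `t ≥ 0` there is a constant
`C` with `f s ≥ f t + C * (s - t) + f |s - t|` for all `s ≥ 0`. -/
def Superquadratic (f : ℝ → ℝ) : Prop :=
  ∀ t : ℝ, 0 ≤ t → ∃ C : ℝ, ∀ s : ℝ, 0 ≤ s → f t + C * (s - t) + f |s - t| ≤ f s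

/-- Apply a real function to a matrix via the functional calculus (junk value `0` if the
matrix is not Hermitian). -/
noncomputable def mfun {n : ℕ} (f : ℝ → ℝ) (A : Matrix (Fin n) (Fin n) ℂ) :
    Matrix (Fin n) (Fin n) ℂ :=
  if h : A.IsHermitian then h.cfc f else 0

/-- The positive semidefinite square root of a positive semidefinite matrix (the definition
Mathlib had before it removed `Matrix.PosSemidef.sqrt`). -/
noncomputable def Matrix.PosSemidef.sqrt {n 𝕜 : Type*} [Fintype n] [DecidableEq n] [RCLike 𝕜]
    {A : Matrix n n 𝕜} (hA : A.PosSemidef) : Matrix n n 𝕜 :=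
  hA.isHermitian.eigenvectorUnitary.1 * diagonal ((↑) ∘ (√·) ∘ hA.isHermitian.eigenvalues) *
  (star hA.isHermitian.eigenvectorUnitary : Matrix n n 𝕜)

/-- `|A| = √(Aᴴ A)`. -/
noncomputable def matAbs {n : ℕ} (A : Matrix (Fin n) (Fin n) ℂ) : Matrix (Fin n) (Fin n) ℂ :=
  (Matrix.posSemidef_conjTranspose_mul_self A).sqrt

/-- Largest eigenvalue of a Hermitian matrix (junk value `0` otherwise). -/
noncomputable def lmax {n : ℕ} (A : Matrix (Fin n) (Fin n) ℂ) : ℝ :=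
  if h : A.IsHermitian then ⨆ i, h.eigenvalues i else 0

/-- Smallest eigenvalue of a Hermitian matrix (junk value `0` otherwise). -/
noncomputable def lmin {n : ℕ} (A : Matrix (Fin n) (Fin n) ℂ) : ℝ :=
  if h : A.IsHermitian then ⨅ i, h.eigenvalues i else 0

/-- `k`-th largest eigenvalue (`k = 0` gives the largest) of a Hermitian matrix
(junk value `0` otherwise). -/
noncomputable def lkth {n : ℕ} (A : Matrix (Fin n) (Fin n) ℂ) (k : Fin n) : ℝ :=
  if h : A.IsHermitian then (h.eigenvalues ∘ Tuple.sort h.eigenvalues) k.rev else 0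

/-- The quadratic form `⟨Ax, x⟩` as a complex number. -/
noncomputable def qf {n : ℕ} (A : Matrix (Fin n) (Fin n) ℂ) (x : Fin n → ℂ) : ℂ :=
  star x ⬝ᵥ A *ᵥ x

/-- Löwner order: `A ⊑ B` iff `B - A` is positive semidefinite. -/
def Loewner {n : ℕ} (A B : Matrix (Fin n) (Fin n) ℂ) : Prop :=
  (B - A).PosSemidef



-- subadditivity of x ↦ x^p on [0,∞) for 0 ≤ p ≤ 1
lemma rpow_subadd {p x y : ℝ} (hp : 0 ≤ p) (hp1 : p ≤ 1) (hx : 0 ≤ x) (hy : 0 ≤ y) :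
    (x + y) ^ p ≤ x ^ p + y ^ p := by
  have h := NNReal.rpow_add_le_add_rpow x.toNNReal y.toNNReal hp hp1
  have := (NNReal.coe_le_coe).2 h
  push_cast at this
  rwa [Real.coe_toNNReal _ hx, Real.coe_toNNReal _ hy] at this

-- Lemma A: (t+b)^q ≤ t^q + q t^(q-1) b + b^q for t,b ≥ 0
lemma lemA {q : ℝ} (hq1 : 1 ≤ q) (hq2 : q ≤ 2) {t b : ℝ} (ht : 0 ≤ t) (hb : 0 ≤ b) :
    (t + b) ^ q ≤ t ^ q + q * t ^ (q - 1) * b + b ^ q := by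
  set F : ℝ → ℝ := fun b => t ^ q + q * t ^ (q - 1) * b + b ^ q - (t + b) ^ q with hF
  have hmono : MonotoneOn F (Set.Ici 0) := by
    apply monotoneOn_of_hasDerivWithinAt_nonneg (convex_Ici 0)
      (f' := fun b => q * t ^ (q-1) + q * b ^ (q-1) - q * (t + b) ^ (q-1))
    · fun_prop (disch := intros; linarith)
    · intro x hx
      rw [interior_Ici] at hx
      have hx0 : (0:ℝ) < x := hx
      have d1 : HasDerivAt (fun b : ℝ => b ^ q) (q * x ^ (q-1)) x :=
        Real.hasDerivAt_rpow_const (Or.inl hx0.ne')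
      have d2 : HasDerivAt (fun b : ℝ => (t + b) ^ q) (q * (t + x) ^ (q-1)) x := by
        have : HasDerivAt (fun b : ℝ => t + b) 1 x := (hasDerivAt_id x).const_add t
        have := (Real.hasDerivAt_rpow_const (p := q)
          (Or.inl (by positivity : (0:ℝ) < t + x).ne')).comp x this
        simpa [Function.comp_def] using this
      have d3 : HasDerivAt F (q * t ^ (q-1) + q * x ^ (q-1) - q * (t + x) ^ (q-1)) x := by
        have := (((hasDerivAt_const x (t^q)).add
          ((hasDerivAt_id x).const_mul (q * t ^ (q-1)))).add d1).sub d2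
        simpa [hF, mul_comm, Pi.add_def, Pi.sub_def] using this
      exact d3.hasDerivWithinAt
    · intro x hx
      rw [interior_Ici] at hx
      have hx0 : (0:ℝ) < x := hx
      have := rpow_subadd (by linarith : (0:ℝ) ≤ q - 1) (by linarith) ht hx0.le
      have hq0 : (0:ℝ) ≤ q := by linarith
      nlinarith [this]
  have := hmono (Set.self_mem_Ici) (by exact hb) hb
  simp [hF] at this
  have h0 : (0:ℝ) ^ q = 0 := Real.zero_rpow (by positivity : q ≠ 0)
  rw [h0] at this
  linarith [this]

-- Lemma B: for 0 ≤ s ≤ t : s^q + q t^(q-1) (t-s) ≤ t^q + (t-s)^q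
lemma lemB {q : ℝ} (hq1 : 1 ≤ q) (hq2 : q ≤ 2) {s t : ℝ} (hs : 0 ≤ s) (hst : s ≤ t) :
    s ^ q + q * t ^ (q - 1) * (t - s) ≤ t ^ q + (t - s) ^ q := by
  set G : ℝ → ℝ := fun s => t ^ q + (t - s) ^ q - s ^ q - q * t ^ (q-1) * (t - s) with hG
  have hanti : AntitoneOn G (Set.Icc 0 t) := by
    apply antitoneOn_of_hasDerivWithinAt_nonpos (convex_Icc 0 t)
      (f' := fun s => q * t ^ (q-1) - q * (t - s) ^ (q-1) - q * s ^ (q-1))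
    · rw [hG]; fun_prop (disch := intros; linarith)
    · intro x hx
      rw [interior_Icc] at hx
      have hx0 : (0:ℝ) < x := hx.1
      have hxt : x < t := hx.2
      have d1 : HasDerivAt (fun s : ℝ => s ^ q) (q * x ^ (q-1)) x :=
        Real.hasDerivAt_rpow_const (Or.inl hx0.ne')
      have d2 : HasDerivAt (fun s : ℝ => (t - s) ^ q) (-(q * (t - x) ^ (q-1))) x := by
        have h : HasDerivAt (fun s : ℝ => t - s) (-1) x := (hasDerivAt_id x).const_sub t
        have := (Real.hasDerivAt_rpow_const (p := q)
          (Or.inl (by linarith : (0:ℝ) < t - x).ne')).comp x h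
        simpa [Function.comp_def] using this
      have d3 : HasDerivAt G (q * t ^ (q-1) - q * (t - x) ^ (q-1) - q * x ^ (q-1)) x := by
        have h4 : HasDerivAt (fun s : ℝ => q * t ^ (q-1) * (t - s)) (-(q * t ^ (q-1))) x := by
          have h : HasDerivAt (fun s : ℝ => t - s) (-1) x := (hasDerivAt_id x).const_sub t
          simpa using h.const_mul (q * t ^ (q-1))
        have h5 := (((hasDerivAt_const x (t^q)).add d2).sub d1).sub h4
        exact h5.congr_deriv (by ring)
      exact d3.hasDerivWithinAt
    · intro x hx
      rw [interior_Icc] at hx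
      have hx0 : (0:ℝ) < x := hx.1
      have hxt : x < t := hx.2
      have hsub := rpow_subadd (by linarith : (0:ℝ) ≤ q - 1) (by linarith)
        hx0.le (by linarith : (0:ℝ) ≤ t - x)
      rw [show x + (t - x) = t by ring] at hsub
      have hq0 : (0:ℝ) ≤ q := by linarith
      nlinarith [hsub]
  have ht0 : 0 ≤ t := le_trans hs hst
  have := hanti (Set.mem_Icc.2 ⟨hs, hst⟩) (Set.mem_Icc.2 ⟨ht0, le_refl t⟩) hst
  simp [hG] at this
  have h0 : (0:ℝ) ^ q = 0 := Real.zero_rpow (by positivity : q ≠ 0)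
  rw [h0] at this
  linarith [this]


/-- for `1 ≤ q ≤ 2`, `x ↦ -x ^ q` is superquadratic. -/
theorem neg_rpow_superquadratic (q : ℝ) (hq1 : 1 ≤ q) (hq2 : q ≤ 2) :
    ∀ t : ℝ, 0 ≤ t → ∃ C : ℝ, ∀ s : ℝ, 0 ≤ s →
      -Real.rpow t q + C * (s - t) - Real.rpow |s - t| q ≤ -Real.rpow s q := by
  intro t ht
  refine ⟨-(q * t ^ (q - 1)), fun s hs => ?_⟩
  show -(t ^ q) + -(q * t ^ (q-1)) * (s - t) - |s - t| ^ q ≤ -(s ^ q)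
  rcases le_or_gt t s with h | h
  · rw [abs_of_nonneg (by linarith)]
    have := lemA hq1 hq2 ht (by linarith : (0:ℝ) ≤ s - t)
    rw [show t + (s - t) = s by ring] at this
    linarith [this]
  · rw [abs_of_neg (by linarith), neg_sub]
    have := lemB hq1 hq2 hs h.le
    linarith [this]
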